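/- Let {Γ_r}_{r∈F} be a finite family of positive semidefinite d×d matrices, let i ∈ F be such that Γ_i ≤ I (Loewner order), and suppose G = ∑_{r∈F} Γ_r is invertible. Define the square-root measurement element R_i = G^{-1/2} Γ_i G^{-1/2}. Then for every d×d density matrix ω, 1 − tr(ω R_i) ≤ 2·tr(ω(I − Γ_i)) + 4·∑_{r∈F, r≠i} tr(ω Γ_r). -/

import Mathlib

open scoped Classical ComplexOrder Matrix

/-- Loewner order on Hermitian matrices: `A ≤ B` iff `B - A` is positive semidefinite. -/
def loewnerLE {m : Type*} [Fintype m] (A B : Matrix m m ℂ) : Prop :=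
  (B - A).PosSemidef

/-- The old Mathlib `Matrix.PosSemidef.sqrt` (removed since), with its original definition. -/
noncomputable def posSemidefSqrt {n : Type*} [Fintype n] [DecidableEq n] {A : Matrix n n ℂ}
    (hA : A.PosSemidef) : Matrix n n ℂ :=
  hA.1.eigenvectorUnitary.1 * Matrix.diagonal ((↑) ∘ (√·) ∘ hA.1.eigenvalues) *
    (star hA.1.eigenvectorUnitary : Matrix n n ℂ)

lemma posSemidefSqrt_posSemidef {n : Type*} [Fintype n] [DecidableEq n] {A : Matrix n n ℂ}
    (hA : A.PosSemidef) : (posSemidefSqrt hA).PosSemidef := by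
  unfold posSemidefSqrt
  have hD : (Matrix.diagonal (((↑) ∘ (√·) ∘ hA.1.eigenvalues) : n → ℂ)).PosSemidef :=
    Matrix.posSemidef_diagonal_iff.mpr fun j => by
      simp only [Function.comp_apply]
      exact_mod_cast Real.sqrt_nonneg _
  have := hD.mul_mul_conjTranspose_same (hA.1.eigenvectorUnitary : Matrix n n ℂ)
  rwa [← Matrix.star_eq_conjTranspose] at this

lemma posSemidefSqrt_mul_self {n : Type*} [Fintype n] [DecidableEq n] {A : Matrix n n ℂ}
    (hA : A.PosSemidef) : posSemidefSqrt hA * posSemidefSqrt hA = A := by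
  unfold posSemidefSqrt
  have hU : (star hA.1.eigenvectorUnitary : Matrix n n ℂ) * hA.1.eigenvectorUnitary.1 = 1 :=
    Unitary.coe_star_mul_self _
  have hD : Matrix.diagonal (((↑) ∘ (√·) ∘ hA.1.eigenvalues) : n → ℂ) *
      Matrix.diagonal (((↑) ∘ (√·) ∘ hA.1.eigenvalues) : n → ℂ)
      = Matrix.diagonal (RCLike.ofReal ∘ hA.1.eigenvalues) := by
    rw [Matrix.diagonal_mul_diagonal]
    congr 1
    ext j
    simp only [Function.comp_apply]
    rw [← Complex.ofReal_mul, Real.mul_self_sqrt (hA.eigenvalues_nonneg j)]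
    rfl
  calc _ = hA.1.eigenvectorUnitary.1 * (Matrix.diagonal (((↑) ∘ (√·) ∘ hA.1.eigenvalues) : n → ℂ)
        * ((star hA.1.eigenvectorUnitary : Matrix n n ℂ) * hA.1.eigenvectorUnitary.1)
        * Matrix.diagonal (((↑) ∘ (√·) ∘ hA.1.eigenvalues) : n → ℂ))
        * (star hA.1.eigenvectorUnitary : Matrix n n ℂ) := by simp only [Matrix.mul_assoc]
    _ = A := by
      rw [hU, Matrix.mul_one, hD]
      conv_rhs => rw [hA.1.spectral_theorem]
      simp [Unitary.conjStarAlgAut_apply]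

lemma trace_mul_re_nonneg' {n : Type*} [Fintype n] [DecidableEq n] {ω K : Matrix n n ℂ}
    (hω : ω.PosSemidef) (hK : K.PosSemidef) : 0 ≤ ((ω * K).trace).re := by
  have hR := posSemidefSqrt_posSemidef hK
  have h2 : (ω * K).trace = ((posSemidefSqrt hK) * ω * (posSemidefSqrt hK)).trace := by
    conv_lhs => rw [← posSemidefSqrt_mul_self hK]
    rw [← Matrix.mul_assoc, Matrix.trace_mul_cycle]
  have hM : ((posSemidefSqrt hK) * ω * (posSemidefSqrt hK)).PosSemidef := by
    have := hω.conjTranspose_mul_mul_same (posSemidefSqrt hK)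
    rwa [hR.1.eq] at this
  rw [h2, Matrix.trace]
  simp only [Complex.re_sum]
  refine Finset.sum_nonneg fun i _ => ?_
  have := hM.re_dotProduct_nonneg (Pi.single i 1)
  simpa [dotProduct, Matrix.mulVec, Pi.single_apply, Finset.sum_ite_eq] using this

lemma psd_sub_of_sq' {n : Type*} [Fintype n] [DecidableEq n] {C D : Matrix n n ℂ}
    (hC : C.PosSemidef) (hD : D.PosSemidef) (hsq : (C * C - D * D).PosSemidef) :
    (C - D).PosSemidef := by
  have hM : (C - D).IsHermitian := hC.1.sub hD.1
  refine hM.posSemidef_iff_eigenvalues_nonneg.mpr fun j => (?_ : (0:ℝ) ≤ hM.eigenvalues j)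
  by_contra hneg
  push_neg at hneg
  set t : ℝ := hM.eigenvalues j with ht
  set x : n → ℂ := ⇑(hM.eigenvectorBasis j) with hx
  have hxe : (C - D) *ᵥ x = (t : ℂ) • x := by
    have := hM.mulVec_eigenvectorBasis j
    rw [← hx] at this
    convert this using 1
    exact (RCLike.real_smul_eq_coe_smul (K := ℂ) _ _).symm
  have hx0 : x ≠ 0 := by
    intro h
    have h1 := hM.eigenvectorBasis.orthonormal.1 j
    have : (hM.eigenvectorBasis j : EuclideanSpace ℂ n) = 0 := by
      ext k; exact congrFun h k
    rw [this] at h1; simp at h1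
  set qC : ℂ := star x ⬝ᵥ C *ᵥ x with hqC
  set qD : ℂ := star x ⬝ᵥ D *ᵥ x with hqD
  have h1 : star x ⬝ᵥ (C * (C - D)) *ᵥ x = (t : ℂ) * qC := by
    rw [← Matrix.mulVec_mulVec, hxe, Matrix.mulVec_smul, dotProduct_smul,
      smul_eq_mul]
  have h2 : star x ⬝ᵥ ((C - D) * D) *ᵥ x = (t : ℂ) * qD := by
    rw [← Matrix.mulVec_mulVec, Matrix.dotProduct_mulVec]
    have : star x ᵥ* (C - D) = (t : ℂ) • star x := by
      have h3 : star ((C - D) *ᵥ x) = star x ᵥ* (C - D) := by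
        rw [Matrix.star_mulVec, hM.eq]
      rw [← h3, hxe, star_smul]
      simp
    rw [this, smul_dotProduct, smul_eq_mul]
  have key : star x ⬝ᵥ (C * C - D * D) *ᵥ x = (t : ℂ) * (qC + qD) := by
    have hdecomp : C * C - D * D = C * (C - D) + (C - D) * D := by noncomm_ring
    rw [hdecomp, Matrix.add_mulVec, dotProduct_add, h1, h2, mul_add]
  have hre : (0:ℝ) ≤ t * (qC + qD).re := by
    have := hsq.re_dotProduct_nonneg x
    rw [key] at this
    simpa [Complex.mul_re] using this
  have hqCre : 0 ≤ qC.re := hC.re_dotProduct_nonneg x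
  have hqDre : 0 ≤ qD.re := hD.re_dotProduct_nonneg x
  have hsum : (qC + qD).re ≤ 0 := by nlinarith
  have hqCre0 : qC.re = 0 := by simp only [Complex.add_re] at hsum; linarith
  have hqDre0 : qD.re = 0 := by simp only [Complex.add_re] at hsum; linarith
  have hqC0 : qC = 0 := by
    have := hC.dotProduct_mulVec_nonneg x
    rw [← hqC] at this
    rw [Complex.le_def] at this
    exact Complex.ext (by simpa using hqCre0) (by simpa using this.2.symm)
  have hqD0 : qD = 0 := by
    have := hD.dotProduct_mulVec_nonneg x
    rw [← hqD] at this
    rw [Complex.le_def] at this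
    exact Complex.ext (by simpa using hqDre0) (by simpa using this.2.symm)
  have hCx : C *ᵥ x = 0 := (hC.dotProduct_mulVec_zero_iff x).1 hqC0
  have hDx : D *ᵥ x = 0 := (hD.dotProduct_mulVec_zero_iff x).1 hqD0
  have : (t : ℂ) • x = 0 := by
    rw [← hxe, Matrix.sub_mulVec, hCx, hDx, sub_zero]
  rcases smul_eq_zero.1 this with h | h
  · exact absurd (by exact_mod_cast h) hneg.ne
  · exact hx0 h

lemma HN_op' {n : Type*} [Fintype n] [DecidableEq n] {S T A : Matrix n n ℂ}
    (hS : S.PosSemidef) (hT : T.PosSemidef)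
    (hA : A.PosSemidef) (hAA : A * A = S + T) (hdet : IsUnit A.det)
    (hsub : (A - S).PosSemidef) :
    (2 * (1 - S) + 4 * T - (1 - A⁻¹ * S * A⁻¹)).PosSemidef := by
  have hPA : A⁻¹ * A = 1 := Matrix.nonsing_inv_mul A hdet
  have hAP : A * A⁻¹ = 1 := Matrix.mul_nonsing_inv A hdet
  have hPH : (A⁻¹)ᴴ = A⁻¹ := by rw [Matrix.conjTranspose_nonsing_inv, hA.1.eq]
  set L : Matrix n n ℂ :=
    (1 - 2*A) * T * (1 - 2*A) + 2*((1 - A) * S * (1 - A)) + 4*(A * (A - S) * A) with hLdef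
  have hB1 : ((1:Matrix n n ℂ) - 2*A)ᴴ = 1 - 2*A := by
    simp only [Matrix.conjTranspose_sub, Matrix.conjTranspose_mul, Matrix.conjTranspose_one,
      Matrix.conjTranspose_ofNat, hA.1.eq]
    noncomm_ring
  have hB2 : ((1:Matrix n n ℂ) - A)ᴴ = 1 - A := by
    simp [Matrix.conjTranspose_sub, hA.1.eq]
  have hL1 : ((1 - 2*A) * T * (1 - 2*A)).PosSemidef := by
    have := hT.conjTranspose_mul_mul_same (1 - 2*A)
    rwa [hB1] at this
  have hL2 : (((1:Matrix n n ℂ) - A) * S * (1 - A)).PosSemidef := by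
    have := hS.conjTranspose_mul_mul_same (1 - A)
    rwa [hB2] at this
  have hL3 : (A * (A - S) * A).PosSemidef := by
    have := hsub.conjTranspose_mul_mul_same A
    rwa [hA.1.eq] at this
  have hL : L.PosSemidef := by
    have h2 : (2*((1 - A) * S * (1 - A)) : Matrix n n ℂ)
        = (1 - A) * S * (1 - A) + (1 - A) * S * (1 - A) := by noncomm_ring
    have h4 : (4*(A * (A - S) * A) : Matrix n n ℂ)
        = A * (A - S) * A + A * (A - S) * A + (A * (A - S) * A + A * (A - S) * A) := by
      noncomm_ring
    rw [hLdef, h2, h4]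
    exact (hL1.add (hL2.add hL2)).add ((hL3.add hL3).add (hL3.add hL3))
  have hT' : T = A * A - S := by rw [hAA]; abel
  have hconj : A * (A⁻¹ * S * A⁻¹) * A = S := by
    rw [Matrix.mul_assoc A⁻¹ S A⁻¹, ← Matrix.mul_assoc A A⁻¹ (S * A⁻¹), hAP, one_mul,
      Matrix.mul_assoc S A⁻¹ A, hPA, mul_one]
  have hmid : A * (2 * (1 - S) + 4 * T - (1 - A⁻¹ * S * A⁻¹)) * A = L := by
    have expand : A * (2 * (1 - S) + 4 * T - (1 - A⁻¹ * S * A⁻¹)) * A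
        = 2*(A*A) - 2*(A*S*A) + 4*(A*T*A) - A*A + A * (A⁻¹ * S * A⁻¹) * A := by
      noncomm_ring
    rw [expand, hconj, hLdef, hT']
    noncomm_ring
  have cancel : ∀ X : Matrix n n ℂ, A⁻¹ * (A * X * A) * A⁻¹ = X := by
    intro X
    rw [Matrix.mul_assoc A X A, ← Matrix.mul_assoc A⁻¹ A (X * A), hPA, one_mul,
      Matrix.mul_assoc X A A⁻¹, hAP, mul_one]
  have hKeq : 2 * (1 - S) + 4 * T - (1 - A⁻¹ * S * A⁻¹) = A⁻¹ * L * A⁻¹ := by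
    rw [← hmid, cancel]
  rw [hKeq]
  have := hL.conjTranspose_mul_mul_same A⁻¹
  rwa [hPH] at this

/-- Hayashi–Nagaoka inequality (trace form) for the square-root measurement: for a family
`{Γ_r}` of positive semidefinite matrices with `Γ_i ≤ I`, `G = ∑_r Γ_r` positive definite
(hence invertible), `R_i = G^{-1/2} Γ_i G^{-1/2}`, and any density matrix `ω`,
`1 − tr(ω R_i) ≤ 2 tr(ω (I − Γ_i)) + 4 ∑_{r ≠ i} tr(ω Γ_r)`. -/
theorem stmt_5 {d : ℕ} {F : Type*} [Fintype F] [DecidableEq F]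
    (Γ : F → Matrix (Fin d) (Fin d) ℂ) (hΓ : ∀ r, (Γ r).PosSemidef)
    (i : F) (hΓi : loewnerLE (Γ i) 1)
    (hG : (∑ r, Γ r).PosDef)
    (ω : Matrix (Fin d) (Fin d) ℂ) (hω : ω.PosSemidef) (hωtr : ω.trace = 1) :
    1 - ((ω * ((posSemidefSqrt hG.posSemidef)⁻¹ * Γ i * (posSemidefSqrt hG.posSemidef)⁻¹)).trace).re ≤
      2 * ((ω * (1 - Γ i)).trace).re +
        4 * ∑ r ∈ Finset.univ.erase i, ((ω * Γ r).trace).re := by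
  set S : Matrix (Fin d) (Fin d) ℂ := Γ i with hSdef
  set T : Matrix (Fin d) (Fin d) ℂ := ∑ r ∈ Finset.univ.erase i, Γ r with hTdef
  set A : Matrix (Fin d) (Fin d) ℂ := posSemidefSqrt hG.posSemidef with hAdef
  have hS : S.PosSemidef := hΓ i
  have hT : T.PosSemidef := by
    rw [hTdef]
    exact Finset.sum_induction _ _ (fun a b ha hb => ha.add hb) Matrix.PosSemidef.zero
      (fun r _ => hΓ r)
  have hS1 : ((1 : Matrix (Fin d) (Fin d) ℂ) - S).PosSemidef := hΓi
  have hA : A.PosSemidef := posSemidefSqrt_posSemidef hG.posSemidef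
  have hGsum : (∑ r, Γ r) = S + T := by
    rw [hSdef, hTdef, Finset.add_sum_erase _ _ (Finset.mem_univ i)]
  have hAA : A * A = S + T := by
    rw [hAdef, posSemidefSqrt_mul_self hG.posSemidef, hGsum]
  have hdet : IsUnit A.det := by
    have hdG : IsUnit (∑ r, Γ r).det := hG.det_pos.ne'.isUnit
    have h : A.det * A.det = (∑ r, Γ r).det := by
      rw [← Matrix.det_mul, hAdef, posSemidefSqrt_mul_self hG.posSemidef]
    exact isUnit_of_mul_isUnit_left (h ▸ hdG)
  -- S - S * S is PSD
  have hSS : (S - S * S).PosSemidef := by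
    have h6 : (posSemidefSqrt hS) * (posSemidefSqrt hS) = S := posSemidefSqrt_mul_self hS
    have h5 : S - S * S = (posSemidefSqrt hS) * (1 - S) * (posSemidefSqrt hS) := by
      calc S - S * S = (posSemidefSqrt hS) * (posSemidefSqrt hS) - (posSemidefSqrt hS) * (posSemidefSqrt hS) * ((posSemidefSqrt hS) * (posSemidefSqrt hS)) := by
            rw [h6]
        _ = (posSemidefSqrt hS) * (1 - (posSemidefSqrt hS) * (posSemidefSqrt hS)) * (posSemidefSqrt hS) := by noncomm_ring
        _ = (posSemidefSqrt hS) * (1 - S) * (posSemidefSqrt hS) := by rw [h6]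
    rw [h5]
    have := hS1.conjTranspose_mul_mul_same (posSemidefSqrt hS)
    rwa [(posSemidefSqrt_posSemidef hS).1.eq] at this
  have hsub : (A - S).PosSemidef := by
    refine psd_sub_of_sq' hA hS ?_
    have h7 : A * A - S * S = T + (S - S * S) := by rw [hAA]; abel
    rw [h7]
    exact hT.add hSS
  have hK : (2 * (1 - S) + 4 * T - (1 - A⁻¹ * S * A⁻¹)).PosSemidef :=
    HN_op' hS hT hA hAA hdet hsub
  have h0 : 0 ≤ ((ω * (2 * (1 - S) + 4 * T - (1 - A⁻¹ * S * A⁻¹))).trace).re :=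
    trace_mul_re_nonneg' hω hK
  -- expand the trace
  have hexp : ω * (2 * (1 - S) + 4 * T - (1 - A⁻¹ * S * A⁻¹))
      = (ω * (1 - S) + ω * (1 - S)) + (ω * T + ω * T + (ω * T + ω * T)) - ω
        + ω * (A⁻¹ * S * A⁻¹) := by
    noncomm_ring
  have htrT : ((ω * T).trace).re = ∑ r ∈ Finset.univ.erase i, ((ω * Γ r).trace).re := by
    rw [hTdef, Finset.mul_sum, Matrix.trace_sum, Complex.re_sum]
  have hωre : (ω.trace).re = 1 := by rw [hωtr]; simp
  rw [hexp] at h0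
  simp only [Matrix.trace_add, Matrix.trace_sub, Complex.add_re, Complex.sub_re] at h0
  rw [hωre, htrT] at h0
  linarith
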